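/- The center of the ℂ-algebra H_ℂ is contained in H^{1,1}; equivalently, the center K of H is a trivial sub-Hodge structure of H (its (2,0)- and (0,2)-parts vanish). -/

import Mathlib

open scoped TensorProduct

noncomputable section

/-- Complex conjugation on `ℂ` as a `ℚ`-algebra homomorphism. -/
def conjQAlg : ℂ →ₐ[ℚ] ℂ := (Complex.conjAe.restrictScalars ℚ).toAlgHom

variable (H : Type) [Ring H] [Algebra ℚ H] [FiniteDimensional ℚ H]

/-- The conjugate-linear involution of `H_ℂ = ℂ ⊗[ℚ] H` fixing `H`. -/
def sigmaC : ℂ ⊗[ℚ] H →ₗ[ℚ] ℂ ⊗[ℚ] H :=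
  (Algebra.TensorProduct.map conjQAlg (AlgHom.id ℚ H)).toLinearMap

/-- The inclusion of `H` into `H_ℂ = ℂ ⊗[ℚ] H`. -/
def inclH : H →ₐ[ℚ] ℂ ⊗[ℚ] H := Algebra.TensorProduct.includeRight

/-- The data of a polarized weight 2 Hodge structure on a finite-dimensional `ℚ`-algebra `H`,
compatible with the ring structure:
(i) a Hodge decomposition `H_ℂ = H^{2,0} ⊕ H^{1,1} ⊕ H^{0,2}` with `σ(H^{2,0}) = H^{0,2}`,
`σ(H^{1,1}) = H^{1,1}`;
(ii) a polarization: a symmetric `ℚ`-bilinear form `B` on `H` with `ℂ`-bilinear extension `BC`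
to `H_ℂ`, whose associated Hermitian pairing `h(α,β) := BC α (σ β)` makes the Hodge pieces
pairwise orthogonal and is positive definite on `H^{2,0}`, `H^{0,2}` and negative definite on
`H^{1,1}`;
(iii) the product is a morphism of Hodge structures of bidegree `(-1,-1)`:
`H^{p,q}·H^{p',q'} ⊆ H^{p+p'-1,q+q'-1}`;
(iv) an adjunction `t`: a `ℚ`-linear involution with `t(ab) = t(b)t(a)`,
`⟨ab,c⟩ = ⟨b, t(a)c⟩` and `⟨ab,c⟩ = ⟨a, c·t(b)⟩`. -/
structure HodgeAlgebraData where
  H20 : Submodule ℂ (ℂ ⊗[ℚ] H)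
  H11 : Submodule ℂ (ℂ ⊗[ℚ] H)
  H02 : Submodule ℂ (ℂ ⊗[ℚ] H)
  sup_top : H20 ⊔ H11 ⊔ H02 = ⊤
  disj1 : H20 ⊓ (H11 ⊔ H02) = ⊥
  disj2 : H11 ⊓ H02 = ⊥
  sigma_20 : ∀ x ∈ H20, sigmaC H x ∈ H02
  sigma_02 : ∀ x ∈ H02, sigmaC H x ∈ H20
  sigma_11 : ∀ x ∈ H11, sigmaC H x ∈ H11
  B : H →ₗ[ℚ] H →ₗ[ℚ] ℚ
  B_symm : ∀ a b : H, B a b = B b a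
  BC : (ℂ ⊗[ℚ] H) →ₗ[ℂ] (ℂ ⊗[ℚ] H) →ₗ[ℂ] ℂ
  BC_extends : ∀ a b : H, BC (inclH H a) (inclH H b) = (B a b : ℂ)
  BC_symm : ∀ x y, BC x y = BC y x
  BC_conj : ∀ x y, BC (sigmaC H x) (sigmaC H y) = starRingEnd ℂ (BC x y)
  orth_20_11 : ∀ x ∈ H20, ∀ y ∈ H11, BC x (sigmaC H y) = 0
  orth_20_02 : ∀ x ∈ H20, ∀ y ∈ H02, BC x (sigmaC H y) = 0
  orth_11_02 : ∀ x ∈ H11, ∀ y ∈ H02, BC x (sigmaC H y) = 0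
  pos_20 : ∀ x ∈ H20, x ≠ 0 → 0 < (BC x (sigmaC H x)).re ∧ (BC x (sigmaC H x)).im = 0
  pos_02 : ∀ x ∈ H02, x ≠ 0 → 0 < (BC x (sigmaC H x)).re ∧ (BC x (sigmaC H x)).im = 0
  neg_11 : ∀ x ∈ H11, x ≠ 0 → (BC x (sigmaC H x)).re < 0 ∧ (BC x (sigmaC H x)).im = 0
  mul_20_20 : ∀ x ∈ H20, ∀ y ∈ H20, x * y = 0
  mul_20_11 : ∀ x ∈ H20, ∀ y ∈ H11, x * y ∈ H20
  mul_11_20 : ∀ x ∈ H11, ∀ y ∈ H20, x * y ∈ H20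
  mul_11_11 : ∀ x ∈ H11, ∀ y ∈ H11, x * y ∈ H11
  mul_20_02 : ∀ x ∈ H20, ∀ y ∈ H02, x * y ∈ H11
  mul_02_20 : ∀ x ∈ H02, ∀ y ∈ H20, x * y ∈ H11
  mul_02_02 : ∀ x ∈ H02, ∀ y ∈ H02, x * y = 0
  mul_11_02 : ∀ x ∈ H11, ∀ y ∈ H02, x * y ∈ H02
  mul_02_11 : ∀ x ∈ H02, ∀ y ∈ H11, x * y ∈ H02
  t : H →ₗ[ℚ] H
  t_invol : ∀ a : H, t (t a) = a
  t_mul : ∀ a b : H, t (a * b) = t b * t a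
  adj_left : ∀ a b c : H, B (a * b) c = B b (t a * c)
  adj_right : ∀ a b c : H, B (a * b) c = B a (c * t b)

variable {H}

/-- `W := H^{2,0}·H_ℂ`, the `ℂ`-linear span of all products `x·y` with `x ∈ H^{2,0}`,
`y ∈ H_ℂ`. -/
def HodgeAlgebraData.W (D : HodgeAlgebraData H) : Submodule ℂ (ℂ ⊗[ℚ] H) := D.H20 * ⊤

/-- `σ(W)`, the image of `W` under the conjugation `σ`, as a `ℚ`-subspace of `H_ℂ`. -/
def HodgeAlgebraData.sigmaW (D : HodgeAlgebraData H) : Submodule ℚ (ℂ ⊗[ℚ] H) :=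
  (D.W.restrictScalars ℚ).map (sigmaC H)

/-- The `ℂ`-linear extension of `t` to `H_ℂ`. -/
def HodgeAlgebraData.tC (D : HodgeAlgebraData H) : ℂ ⊗[ℚ] H →ₗ[ℂ] ℂ ⊗[ℚ] H :=
  LinearMap.baseChange ℂ D.t

/-! The `(2,0)`-component of a central element of `H_ℂ` is again central, because the product is
graded of bidegree `(-1,-1)`. For a central `a ∈ H^{2,0}` the element `c = t(a)·σ(a)` lies in
`H^{1,1}` (the adjunction forces `t` to preserve `H^{2,0}`), and `h(c, c) = ⟨σa, a·σ(t a)·a⟩ = 0`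
since `a` commutes with `σ(t a)` and `a² = 0`; negativity on `H^{1,1}` gives `c = 0`, and then
`h(a, a) = ⟨1, c⟩ = 0` forces `a = 0`. Conjugating, the `(0,2)`-component vanishes as well. -/

set_option linter.unusedSectionVars false

theorem Submodule.eq_of_add_eq_add_of_disjoint {R M : Type*} [Ring R] [AddCommGroup M]
    [Module R M] {N₁ N₂ : Submodule R M} (h : Disjoint N₁ N₂) {x x' y y' : M}
    (hx : x ∈ N₁) (hx' : x' ∈ N₁) (hy : y ∈ N₂) (hy' : y' ∈ N₂) (e : x + y = x' + y') :
    x = x' ∧ y = y' := by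
  have := Submodule.disjoint_iff_add_eq_zero.1 h (sub_mem hx hx') (sub_mem hy hy')
    (by rw [sub_add_sub_comm, e, sub_self])
  exact ⟨sub_eq_zero.1 this.1, sub_eq_zero.1 this.2⟩

theorem sigmaC_tmul (c : ℂ) (a : H) : sigmaC H (c ⊗ₜ[ℚ] a) = starRingEnd ℂ c ⊗ₜ[ℚ] a := by
  simp [sigmaC, conjQAlg]

theorem sigmaC_sigmaC (x : ℂ ⊗[ℚ] H) : sigmaC H (sigmaC H x) = x := by
  induction x using TensorProduct.induction_on with
  | zero => simp
  | tmul c a => simp [sigmaC_tmul]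
  | add x y hx hy => simp [hx, hy]

theorem sigmaC_mul (x y : ℂ ⊗[ℚ] H) : sigmaC H (x * y) = sigmaC H x * sigmaC H y :=
  map_mul (Algebra.TensorProduct.map conjQAlg (AlgHom.id ℚ H)) x y

theorem sigmaC_one : sigmaC H (1 : ℂ ⊗[ℚ] H) = 1 :=
  map_one (Algebra.TensorProduct.map conjQAlg (AlgHom.id ℚ H))

theorem commute_sigmaC {x : ℂ ⊗[ℚ] H} (hx : ∀ y, Commute x y) (y : ℂ ⊗[ℚ] H) :
    Commute (sigmaC H x) y := by
  have := congrArg (sigmaC H) (hx (sigmaC H y)).eq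
  rwa [sigmaC_mul, sigmaC_mul, sigmaC_sigmaC] at this

namespace HodgeAlgebraData

variable (D : HodgeAlgebraData H)

theorem tC_tmul (c : ℂ) (a : H) : D.tC (c ⊗ₜ[ℚ] a) = c ⊗ₜ[ℚ] D.t a :=
  LinearMap.baseChange_tmul _ _ _

theorem tC_tC (x : ℂ ⊗[ℚ] H) : D.tC (D.tC x) = x := by
  induction x using TensorProduct.induction_on with
  | zero => simp
  | tmul c a => simp [tC_tmul, t_invol]
  | add x y hx hy => simp [hx, hy]

theorem BC_tmul (c d : ℂ) (a b : H) :
    D.BC (c ⊗ₜ[ℚ] a) (d ⊗ₜ[ℚ] b) = c * d * (D.B a b : ℂ) := by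
  have (e : ℂ) (a : H) : (e ⊗ₜ[ℚ] a : ℂ ⊗[ℚ] H) = e • inclH H a := by
    simp [inclH, TensorProduct.smul_tmul']
  rw [this c, this d, map_smul, map_smul, LinearMap.smul_apply, D.BC_extends]
  simp only [smul_eq_mul]
  ring

theorem BC_mul_left (x y z : ℂ ⊗[ℚ] H) : D.BC (x * y) z = D.BC y (D.tC x * z) := by
  induction x using TensorProduct.induction_on with
  | zero => simp
  | add x₁ x₂ h₁ h₂ => simp [add_mul, h₁, h₂]
  | tmul c a =>
    induction y using TensorProduct.induction_on with
    | zero => simp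
    | add y₁ y₂ h₁ h₂ => simp [mul_add, h₁, h₂]
    | tmul d b =>
      induction z using TensorProduct.induction_on with
      | zero => simp
      | add z₁ z₂ h₁ h₂ => rw [map_add, h₁, h₂, mul_add, map_add]
      | tmul e g =>
        simp only [Algebra.TensorProduct.tmul_mul_tmul, tC_tmul, BC_tmul, adj_left]
        ring

theorem exists_decomp (x : ℂ ⊗[ℚ] H) :
    ∃ p ∈ D.H20, ∃ q ∈ D.H11, ∃ r ∈ D.H02, x = p + q + r := by
  obtain ⟨u, hu, r, hr, rfl⟩ := Submodule.mem_sup.1 (D.sup_top ▸ Submodule.mem_top (x := x))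
  obtain ⟨p, hp, q, hq, rfl⟩ := Submodule.mem_sup.1 hu
  exact ⟨p, hp, q, hq, r, hr, rfl⟩

theorem decomp_unique {p q r p' q' r' : ℂ ⊗[ℚ] H} (hp : p ∈ D.H20) (hq : q ∈ D.H11)
    (hr : r ∈ D.H02) (hp' : p' ∈ D.H20) (hq' : q' ∈ D.H11) (hr' : r' ∈ D.H02)
    (h : p + q + r = p' + q' + r') : p = p' ∧ q = q' ∧ r = r' := by
  rw [add_assoc, add_assoc] at h
  obtain ⟨hpp', hqr⟩ := Submodule.eq_of_add_eq_add_of_disjoint (disjoint_iff.2 D.disj1) hp hp'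
    (Submodule.add_mem_sup hq hr) (Submodule.add_mem_sup hq' hr') h
  exact ⟨hpp', Submodule.eq_of_add_eq_add_of_disjoint (disjoint_iff.2 D.disj2)
    hq hq' hr hr' hqr⟩

theorem one_mem_H11 : (1 : ℂ ⊗[ℚ] H) ∈ D.H11 := by
  obtain ⟨p, hp, q, hq, r, hr, h1⟩ := D.exists_decomp 1
  have hpq : p * q = 0 := by
    have e : 0 + q + 0 = p * q + q * q + r * q := by
      rw [← add_mul, ← add_mul, ← h1, one_mul, zero_add, add_zero]
    exact (D.decomp_unique (zero_mem _) hq (zero_mem _) (D.mul_20_11 p hp q hq)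
      (D.mul_11_11 q hq q hq) (D.mul_02_11 r hr q hq) e).1.symm
  have hp0 : p = 0 := by
    have e : p + 0 + 0 = 0 + p * r + 0 := calc
      p + 0 + 0 = p * (p + q + r) := by rw [← h1, mul_one, add_zero, add_zero]
      _ = 0 + p * r + 0 := by rw [mul_add, mul_add, D.mul_20_20 p hp p hp, hpq, zero_add, add_zero]
    exact (D.decomp_unique hp (zero_mem _) (zero_mem _) (zero_mem _) (D.mul_20_02 p hp r hr)
      (zero_mem _) e).1
  rw [hp0, zero_add] at h1
  have hrq : r * q = 0 := by
    have e : 0 + q + 0 = 0 + q * q + r * q := by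
      rw [zero_add, zero_add, add_zero, ← add_mul, ← h1, one_mul]
    exact (D.decomp_unique (zero_mem _) hq (zero_mem _) (zero_mem _) (D.mul_11_11 q hq q hq)
      (D.mul_02_11 r hr q hq) e).2.2.symm
  have hr0 : r = 0 := calc
    r = r * (q + r) := by rw [← h1, mul_one]
    _ = 0 := by rw [mul_add, hrq, D.mul_02_02 r hr r hr, add_zero]
  rwa [h1, hr0, add_zero]

theorem BC_sigmaC_comm (x y : ℂ ⊗[ℚ] H) :
    D.BC x (sigmaC H y) = starRingEnd ℂ (D.BC y (sigmaC H x)) := by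
  rw [D.BC_symm, ← D.BC_conj, sigmaC_sigmaC]

theorem orth_02_11 {x y : ℂ ⊗[ℚ] H} (hx : x ∈ D.H02) (hy : y ∈ D.H11) :
    D.BC x (sigmaC H y) = 0 := by
  rw [BC_sigmaC_comm, D.orth_11_02 y hy x hx, map_zero]

theorem eq_zero_of_mem_H20 {x : ℂ ⊗[ℚ] H} (hx : x ∈ D.H20) (h : D.BC x (sigmaC H x) = 0) :
    x = 0 := by
  by_contra hx0
  simpa [h] using (D.pos_20 x hx hx0).1

theorem eq_zero_of_mem_H11 {x : ℂ ⊗[ℚ] H} (hx : x ∈ D.H11) (h : D.BC x (sigmaC H x) = 0) :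
    x = 0 := by
  by_contra hx0
  simpa [h] using (D.neg_11 x hx hx0).1

theorem eq_zero_of_mem_H02 {x : ℂ ⊗[ℚ] H} (hx : x ∈ D.H02) (h : D.BC x (sigmaC H x) = 0) :
    x = 0 := by
  by_contra hx0
  simpa [h] using (D.pos_02 x hx hx0).1

theorem mem_H20_of_orthogonal {v : ℂ ⊗[ℚ] H} (h11 : ∀ u ∈ D.H11, D.BC v (sigmaC H u) = 0)
    (h02 : ∀ u ∈ D.H02, D.BC v (sigmaC H u) = 0) : v ∈ D.H20 := by
  obtain ⟨p, hp, q, hq, r, hr, rfl⟩ := D.exists_decomp v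
  have hq0 : q = 0 := D.eq_zero_of_mem_H11 hq <| by
    simpa [D.orth_20_11 p hp q hq, D.orth_02_11 hr hq] using h11 q hq
  have hr0 : r = 0 := D.eq_zero_of_mem_H02 hr <| by
    simpa [D.orth_20_02 p hp r hr, D.orth_11_02 q hq r hr] using h02 r hr
  simpa [hq0, hr0] using hp

theorem BC_one_eq_zero_of_mem_H20 {w : ℂ ⊗[ℚ] H} (hw : w ∈ D.H20) : D.BC 1 w = 0 := by
  rw [D.BC_symm, ← sigmaC_one]
  exact D.orth_20_11 w hw 1 D.one_mem_H11

theorem BC_tC_eq_BC_one_mul (a x : ℂ ⊗[ℚ] H) : D.BC (D.tC a) x = D.BC 1 (a * x) := by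
  rw [← mul_one (D.tC a), D.BC_mul_left, D.tC_tC]

theorem tC_mem_H20 {a : ℂ ⊗[ℚ] H} (ha : a ∈ D.H20) : D.tC a ∈ D.H20 := by
  refine D.mem_H20_of_orthogonal (fun u hu => ?_) (fun u hu => ?_) <;> rw [BC_tC_eq_BC_one_mul]
  · exact D.BC_one_eq_zero_of_mem_H20 (D.mul_20_11 a ha _ (D.sigma_11 u hu))
  · rw [D.mul_20_20 a ha _ (D.sigma_02 u hu), map_zero]

theorem commute_of_forall_mem {x : ℂ ⊗[ℚ] H} (h20 : ∀ u ∈ D.H20, Commute x u)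
    (h11 : ∀ u ∈ D.H11, Commute x u) (h02 : ∀ u ∈ D.H02, Commute x u) (y : ℂ ⊗[ℚ] H) :
    Commute x y := by
  obtain ⟨u, hu, v, hv, w, hw, rfl⟩ := D.exists_decomp y
  exact ((h20 u hu).add_right (h11 v hv)).add_right (h02 w hw)

theorem commute_H20_component {p q r : ℂ ⊗[ℚ] H} (hp : p ∈ D.H20) (hq : q ∈ D.H11)
    (hr : r ∈ D.H02) (hx : ∀ y, Commute (p + q + r) y) (y : ℂ ⊗[ℚ] H) : Commute p y := by
  refine D.commute_of_forall_mem (fun u hu => ?_) (fun u hu => ?_) (fun u hu => ?_) y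
  · exact (D.mul_20_20 p hp u hu).trans (D.mul_20_20 u hu p hp).symm
  · have e : p * u + q * u + r * u = u * p + u * q + u * r := by
      simpa only [add_mul, mul_add] using (hx u).eq
    exact (D.decomp_unique (D.mul_20_11 p hp u hu) (D.mul_11_11 q hq u hu) (D.mul_02_11 r hr u hu)
      (D.mul_11_20 u hu p hp) (D.mul_11_11 u hu q hq) (D.mul_11_02 u hu r hr) e).1
  · have e : 0 + p * u + q * u = 0 + u * p + u * q := by
      simpa only [add_mul, mul_add, D.mul_02_02 r hr u hu, D.mul_02_02 u hu r hr, add_zero,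
        zero_add] using (hx u).eq
    exact (D.decomp_unique (zero_mem _) (D.mul_20_02 p hp u hu) (D.mul_11_02 q hq u hu)
      (zero_mem _) (D.mul_02_20 u hu p hp) (D.mul_02_11 u hu q hq) e).2.1

theorem eq_zero_of_mem_H20_of_commute {a : ℂ ⊗[ℚ] H} (ha : a ∈ D.H20)
    (hc : ∀ y, Commute a y) : a = 0 := by
  have hc0 : D.tC a * sigmaC H a = 0 := by
    refine D.eq_zero_of_mem_H11 (D.mul_20_02 _ (D.tC_mem_H20 ha) _ (D.sigma_20 a ha)) ?_
    rw [D.BC_mul_left, D.tC_tC, sigmaC_mul, sigmaC_sigmaC, (hc _).left_comm,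
      D.mul_20_20 a ha a ha, mul_zero, map_zero]
  apply D.eq_zero_of_mem_H20 ha
  rw [← mul_one a, D.BC_mul_left, mul_one, hc0, map_zero]

end HodgeAlgebraData

/-- The center of the `ℂ`-algebra `H_ℂ` is contained in `H^{1,1}`;
equivalently, the center `K` of `H` is a trivial sub-Hodge structure of `H` (its `(2,0)`-
and `(0,2)`-parts vanish). -/
theorem center_subset_H11 (D : HodgeAlgebraData H) :
    ∀ x : ℂ ⊗[ℚ] H, (∀ y : ℂ ⊗[ℚ] H, x * y = y * x) → x ∈ D.H11 := by
  intro x hx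
  obtain ⟨p, hp, q, hq, r, hr, rfl⟩ := D.exists_decomp x
  have hp0 : p = 0 := D.eq_zero_of_mem_H20_of_commute hp (D.commute_H20_component hp hq hr hx)
  have hσx : ∀ y, Commute (sigmaC H r + sigmaC H q + sigmaC H p) y := by
    simpa only [map_add, add_comm, add_left_comm] using commute_sigmaC hx
  have hσr0 : sigmaC H r = 0 := D.eq_zero_of_mem_H20_of_commute (D.sigma_02 r hr)
    (D.commute_H20_component (D.sigma_02 r hr) (D.sigma_11 q hq) (D.sigma_20 p hp) hσx)
  have hr0 : r = 0 := by rw [← sigmaC_sigmaC r, hσr0, map_zero]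
  simpa [hp0, hr0] using hq
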